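/- arXiv:1002.1929 — 4 statements merged into one kernel-verified Lean document; each statement's English description precedes it below -/
import Mathlib

section
/- For a fixed y ∈ (0, π/2), the function f_y(x) = arccos(sin²(y)·cos(x) + cos²(y)) satisfies f_y(x) ≤ sin(y)·x for all x ∈ [0, π/2]. -/
/-!
Write `s = sin y`, so that `cos² y = 1 - s²`. By the half-angle formula the inequality
`cos (s x) ≤ s² cos x + 1 - s²` is equivalent to `s sin (x/2) ≤ sin (s x/2)`, which is the
concavity of `sin` on `[0, π]` between `0` and `x/2`. Since `arccos` is antitone and inverts `cos`
on `[0, π]`, this gives `arccos (s² cos x + 1 - s²) ≤ s x`.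
-/

open Real Set

namespace Real

lemma mul_sin_le_sin_mul {s u : ℝ} (hs₀ : 0 ≤ s) (hs₁ : s ≤ 1) (hu₀ : 0 ≤ u) (hu : u ≤ π) :
    s * sin u ≤ sin (s * u) := by
  have h := strictConcaveOn_sin_Icc.concaveOn.2 (x := u) (y := 0) ⟨hu₀, hu⟩
    ⟨le_rfl, pi_pos.le⟩ hs₀ (sub_nonneg.2 hs₁) (by ring)
  simpa using h

lemma cos_mul_le_sq_mul_cos_add {s x : ℝ} (hs₀ : 0 ≤ s) (hs₁ : s ≤ 1) (hx₀ : 0 ≤ x)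
    (hx : x ≤ 2 * π) : cos (s * x) ≤ s ^ 2 * cos x + (1 - s ^ 2) := by
  have hsin : s * sin (x / 2) ≤ sin (s * (x / 2)) :=
    mul_sin_le_sin_mul hs₀ hs₁ (by linarith) (by linarith)
  have hsin₀ : 0 ≤ s * sin (x / 2) :=
    mul_nonneg hs₀ (sin_nonneg_of_nonneg_of_le_pi (by linarith) (by linarith))
  have hsq : (s * sin (x / 2)) ^ 2 ≤ sin (s * (x / 2)) ^ 2 := pow_le_pow_left₀ hsin₀ hsin 2
  calc cos (s * x) = 1 - 2 * sin (s * (x / 2)) ^ 2 := by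
        rw [← cos_two_mul_eq_one_sub]; ring_nf
    _ ≤ 1 - 2 * (s * sin (x / 2)) ^ 2 := by linarith
    _ = s ^ 2 * (1 - 2 * sin (x / 2) ^ 2) + (1 - s ^ 2) := by ring
    _ = s ^ 2 * cos x + (1 - s ^ 2) := by rw [← cos_two_mul_eq_one_sub]; ring_nf

lemma arccos_le_of_cos_le {a t : ℝ} (ha₀ : 0 ≤ a) (ha : a ≤ π) (h : cos a ≤ t) :
    arccos t ≤ a :=
  (arccos_le_arccos h).trans_eq (arccos_cos ha₀ ha)

lemma arccos_sq_mul_cos_add_le {s x : ℝ} (hs₀ : 0 ≤ s) (hs₁ : s ≤ 1) (hx₀ : 0 ≤ x)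
    (hx : x ≤ π) : arccos (s ^ 2 * cos x + (1 - s ^ 2)) ≤ s * x :=
  arccos_le_of_cos_le (mul_nonneg hs₀ hx₀) (by nlinarith)
    (cos_mul_le_sq_mul_cos_add hs₀ hs₁ hx₀ (by linarith [pi_pos]))

end Real

/-- for fixed `y ∈ (0, π/2)`,
`f_y(x) = arccos(sin²y·cos x + cos²y) ≤ sin y · x` for all `x ∈ [0, π/2]`. -/
theorem stmt1 (y : ℝ) (hy : y ∈ Ioo 0 (π / 2)) :
    ∀ x ∈ Icc 0 (π / 2), arccos (sin y ^ 2 * cos x + cos y ^ 2) ≤ sin y * x := by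
  rintro x ⟨hx₀, hx⟩
  have hsin₀ : 0 ≤ sin y := sin_nonneg_of_nonneg_of_le_pi hy.1.le (by linarith [hy.2, pi_pos])
  rw [cos_sq']
  exact arccos_sq_mul_cos_add_le hsin₀ (sin_le_one y) hx₀ (by linarith [pi_pos])
end

section
/- For all x in (0, 2·arcsinh(1)), with F as above, one has x + 2·F(x/2) < 2·F(x). -/
/-!
Since `arsinh (s / √(1 - s²)) = artanh s`, we have `F x = x/2 + artanh (sinh (x/2))`, and with
`t = x/4` the inequality becomes `G t < G (2t)` for `G t = artanh (sinh t) - t`. The function `G`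
is strictly increasing on `[0, arsinh 1)` because `G' t = cosh t / (1 - sinh² t) - 1 > 0` for `t > 0`.
-/

open Real Set

noncomputable def Ffun (x : ℝ) : ℝ :=
  x / 2 + Real.arsinh (Real.sinh (x / 2) / Real.sqrt (1 - Real.sinh (x / 2) ^ 2))

open Filter Topology

theorem Real.hasDerivAt_artanh {x : ℝ} (hx : x ∈ Ioo (-1) 1) :
    HasDerivAt artanh (1 - x ^ 2)⁻¹ x := by
  have h_eq : (fun y => 1 / 2 * (log (1 + y) - log (1 - y))) =ᶠ[𝓝 x] artanh := by
    filter_upwards [Ioo_mem_nhds hx.1 hx.2] with y hy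
    rw [artanh_eq_half_log (Ioo_subset_Icc_self hy), log_div (by grind) (by grind)]
  have hplus : HasDerivAt (fun y => log (1 + y)) (1 / (1 + x)) x := by
    simpa using ((hasDerivAt_id x).const_add 1).log (by grind)
  have hminus : HasDerivAt (fun y => log (1 - y)) (-1 / (1 - x)) x := by
    simpa using ((hasDerivAt_id x).const_sub 1).log (by grind)
  refine (((hplus.sub hminus).const_mul (1 / 2)).congr_of_eventuallyEq h_eq.symm).congr_deriv ?_
  have : 1 + x ≠ 0 := by grind
  have : 1 - x ≠ 0 := by grind
  rw [show 1 - x ^ 2 = (1 + x) * (1 - x) by ring]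
  field_simp
  ring

theorem Real.arsinh_div_sqrt_one_sub_sq {x : ℝ} (hx : x ∈ Ioo (-1) 1) :
    arsinh (x / √(1 - x ^ 2)) = artanh x := by
  rw [← sinh_artanh hx, arsinh_sinh]

theorem sinh_mem_Ioo_of_mem_Ico {t : ℝ} (ht : t ∈ Ico 0 (arsinh 1)) : sinh t ∈ Ioo (-1) 1 := by
  have h0 : 0 ≤ sinh t := sinh_nonneg_iff.2 ht.1
  have h1 : sinh t < 1 := by simpa using sinh_lt_sinh.2 ht.2
  exact ⟨by linarith, h1⟩

theorem strictMonoOn_artanh_sinh_sub_self :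
    StrictMonoOn (fun t => artanh (sinh t) - t) (Ico 0 (arsinh 1)) := by
  have hderiv : ∀ t ∈ Ico 0 (arsinh 1),
      HasDerivAt (fun t => artanh (sinh t) - t) ((1 - sinh t ^ 2)⁻¹ * cosh t - 1) t :=
    fun t ht => ((hasDerivAt_artanh (sinh_mem_Ioo_of_mem_Ico ht)).comp t
      (hasDerivAt_sinh t)).sub (hasDerivAt_id t)
  refine strictMonoOn_of_deriv_pos (convex_Ico _ _)
    (fun t ht => (hderiv t ht).continuousAt.continuousWithinAt) fun t ht => ?_
  rw [interior_Ico] at ht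
  have hs : sinh t ∈ Ioo 0 1 :=
    ⟨sinh_pos_iff.2 ht.1, (sinh_mem_Ioo_of_mem_Ico (Ioo_subset_Ico_self ht)).2⟩
  have hc : 1 ≤ cosh t := one_le_cosh t
  rw [(hderiv t (Ioo_subset_Ico_self ht)).deriv, sub_pos, inv_mul_eq_div,
    one_lt_div (by nlinarith [hs.1, hs.2])]
  nlinarith [hs.1]

theorem Ffun_eq_half_add_artanh {x : ℝ} (hx : sinh (x / 2) ∈ Ioo (-1) 1) :
    Ffun x = x / 2 + artanh (sinh (x / 2)) := by
  rw [Ffun, arsinh_div_sqrt_one_sub_sq hx]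

/-- for all `x ∈ (0, 2·arcsinh 1)`, `x + 2·F(x/2) < 2·F(x)`. -/
theorem stmt5 : ∀ x ∈ Ioo 0 (2 * Real.arsinh 1), x + 2 * Ffun (x / 2) < 2 * Ffun x := by
  rintro x ⟨hx0, hx1⟩
  have hquarter : x / 2 / 2 ∈ Ico 0 (arsinh 1) := ⟨by linarith, by linarith⟩
  have hhalf : x / 2 ∈ Ico 0 (arsinh 1) := ⟨by linarith, by linarith⟩
  have hG := strictMonoOn_artanh_sinh_sub_self hquarter hhalf (by linarith)
  rw [Ffun_eq_half_add_artanh (sinh_mem_Ioo_of_mem_Ico hhalf),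
    Ffun_eq_half_add_artanh (sinh_mem_Ioo_of_mem_Ico hquarter)]
  linarith
end

section
/- Suppose T is a hyperbolic triangle with one side of length C > 0 whose opposite angle equals γ ∈ (0, π). Then the sum of the lengths of the other two sides is at most 2·arcsinh( sinh(C/2) / sin(γ/2) ); consequently the perimeter of T is at most C + 2·arcsinh( sinh(C/2) / sin(γ/2) ). -/
open Real Set

/-!
Halving `γ` in the law of cosines writes `cosh C` as the convex combination
`cos² (γ/2) · cosh (a - b) + sin² (γ/2) · cosh (a + b)`. Since `cosh (a - b) ≥ 1`, this gives
`sin² (γ/2) · (cosh (a + b) - 1) ≤ cosh C - 1`, i.e. `sin (γ/2) · sinh ((a + b)/2) ≤ sinh (C/2)`,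
with equality exactly when `a = b`.
-/

namespace Real

theorem cosh_mul_cosh_sub_sinh_mul_sinh_mul_cos (a b γ : ℝ) :
    cosh a * cosh b - sinh a * sinh b * cos γ =
      cos (γ / 2) ^ 2 * cosh (a - b) + sin (γ / 2) ^ 2 * cosh (a + b) := by
  have hcos : cos γ = cos (γ / 2) ^ 2 - sin (γ / 2) ^ 2 := by
    rw [← cos_two_mul', mul_div_cancel₀ γ two_ne_zero]
  rw [hcos, cosh_sub, cosh_add]
  linear_combination -cosh a * cosh b * sin_sq_add_cos_sq (γ / 2)

theorem cosh_sub_one_eq_two_mul_sinh_half_sq (x : ℝ) : cosh x - 1 = 2 * sinh (x / 2) ^ 2 := by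
  conv_lhs => rw [← mul_div_cancel₀ x two_ne_zero, cosh_two_mul, cosh_sq]
  ring

theorem sin_half_mul_sinh_half_add_le {a b C γ : ℝ} (hC : 0 ≤ C)
    (hlaw : cosh C = cosh a * cosh b - sinh a * sinh b * cos γ) :
    sin (γ / 2) * sinh ((a + b) / 2) ≤ sinh (C / 2) := by
  rw [cosh_mul_cosh_sub_sinh_mul_sinh_mul_cos] at hlaw
  have hsq : (sin (γ / 2) * sinh ((a + b) / 2)) ^ 2 ≤ sinh (C / 2) ^ 2 := by
    have hab := cosh_sub_one_eq_two_mul_sinh_half_sq (a + b)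
    have hC' := cosh_sub_one_eq_two_mul_sinh_half_sq C
    nlinarith [mul_nonneg (sq_nonneg (cos (γ / 2))) (sub_nonneg.2 (one_le_cosh (a - b))),
      sin_sq_add_cos_sq (γ / 2)]
  have hsinhC : 0 ≤ sinh (C / 2) := sinh_nonneg_iff.2 (by positivity)
  calc sin (γ / 2) * sinh ((a + b) / 2) ≤ |sin (γ / 2) * sinh ((a + b) / 2)| := le_abs_self _
    _ ≤ |sinh (C / 2)| := sq_le_sq.1 hsq
    _ = sinh (C / 2) := abs_of_nonneg hsinhC

end Real

theorem stmt6_general (a b C γ : ℝ) (hC : 0 < C)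
    (hγ : γ ∈ Ioo 0 π)
    (hlaw : Real.cosh C = Real.cosh a * Real.cosh b - Real.sinh a * Real.sinh b * Real.cos γ) :
    a + b ≤ 2 * Real.arsinh (Real.sinh (C / 2) / Real.sin (γ / 2)) ∧
      a + b + C ≤ C + 2 * Real.arsinh (Real.sinh (C / 2) / Real.sin (γ / 2)) := by
  have hsin : 0 < sin (γ / 2) :=
    sin_pos_of_pos_of_lt_pi (half_pos hγ.1) (by linarith [hγ.2, pi_pos])
  have hsinh : sinh ((a + b) / 2) ≤ sinh (C / 2) / sin (γ / 2) := by
    rw [le_div_iff₀ hsin, mul_comm]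
    exact sin_half_mul_sinh_half_add_le hC.le hlaw
  have hhalf : (a + b) / 2 ≤ arsinh (sinh (C / 2) / sin (γ / 2)) := by
    simpa only [arsinh_sinh] using arsinh_le_arsinh.2 hsinh
  constructor <;> linarith

/-- a hyperbolic triangle with side lengths `a`, `b`, `C`, where the
angle `γ` opposite the side of length `C` is given by the hyperbolic law of cosines,
has `a + b ≤ 2·arcsinh(sinh(C/2)/sin(γ/2))`, and hence perimeter at most
`C + 2·arcsinh(sinh(C/2)/sin(γ/2))`. -/
theorem stmt6 (a b C γ : ℝ) (ha : 0 < a) (hb : 0 < b) (hC : 0 < C)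
    (hγ : γ ∈ Ioo 0 π)
    (hlaw : Real.cosh C = Real.cosh a * Real.cosh b - Real.sinh a * Real.sinh b * Real.cos γ) :
    a + b ≤ 2 * Real.arsinh (Real.sinh (C / 2) / Real.sin (γ / 2)) ∧
      a + b + C ≤ C + 2 * Real.arsinh (Real.sinh (C / 2) / Real.sin (γ / 2)) :=
  stmt6_general a b C γ hC hγ hlaw
end

section
/- Fix G > 0 and φ ∈ (0, π/2], and define f(s) = arcsinh( sinh(s) / sin(φ) ). Then f is odd, strictly increasing, and concave on [0, ∞); consequently sup { f(s) − f(s − G) : s ≥ G/2 } = f(G/2) − f(−G/2) = 2·arcsinh( sinh(G/2) / sin(φ) ). -/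
/-!
The derivative of `f s = arsinh (sinh s / a)` is `√((1 + sinh² s) / (a² + sinh² s))`, which
decreases as `sinh² s` grows when `a ≤ 1`; hence `f` is concave on `[0, ∞)`. For an odd `f`
concave on `[0, ∞)` and `G / 2 ≤ s`: if `s ≤ G`, then `f s - f (s - G) = f s + f (G - s)`, which
is at most `2 f (G / 2)` by midpoint concavity; if `s ≥ G`, subadditivity of `f` on `[0, ∞)`
(concavity plus `f 0 = 0`) gives `f s - f (s - G) ≤ f G ≤ 2 f (G / 2)`.
-/

open Real Set

theorem ConcaveOn.add_le_two_mul_map_midpoint {s : Set ℝ} {f : ℝ → ℝ} (hf : ConcaveOn ℝ s f)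
    {x y : ℝ} (hx : x ∈ s) (hy : y ∈ s) : f x + f y ≤ 2 * f ((x + y) / 2) := by
  have h := hf.2 hx hy (show (0 : ℝ) ≤ 1 / 2 by norm_num) (show (0 : ℝ) ≤ 1 / 2 by norm_num)
    (by norm_num)
  simp only [smul_eq_mul] at h
  rw [show 1 / 2 * x + 1 / 2 * y = (x + y) / 2 by ring] at h
  linarith

theorem ConcaveOn.map_add_le_of_nonneg {f : ℝ → ℝ} (hf : ConcaveOn ℝ (Ici 0) f) (h0 : 0 ≤ f 0)
    {x y : ℝ} (hx : 0 ≤ x) (hy : 0 ≤ y) : f (x + y) ≤ f x + f y := by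
  rcases (add_nonneg hx hy).eq_or_lt with hxy | hxy
  · obtain ⟨rfl, rfl⟩ : x = 0 ∧ y = 0 := ⟨by linarith, by linarith⟩
    simpa using h0
  have key : ∀ {u v : ℝ}, 0 ≤ u → 0 ≤ v → u + v = x + y → u / (x + y) * f (x + y) ≤ f u := by
    intro u v hu hv huv
    have h := hf.2 self_mem_Ici (mem_Ici.2 hxy.le)
      (show 0 ≤ v / (x + y) by positivity) (show 0 ≤ u / (x + y) by positivity)
      (by rw [← add_div, add_comm, huv, div_self hxy.ne'])
    simp only [smul_eq_mul, mul_zero, zero_add, div_mul_cancel₀ _ hxy.ne'] at h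
    nlinarith [mul_nonneg (div_nonneg hv hxy.le) h0]
  have h1 := key hx hy rfl
  have h2 := key hy hx (add_comm y x)
  have h := add_le_add h1 h2
  rwa [← add_mul, ← add_div, div_self hxy.ne', one_mul] at h

theorem Function.Odd.sub_le_two_mul_map_half_of_concaveOn {f : ℝ → ℝ} (hodd : f.Odd)
    (hf : ConcaveOn ℝ (Ici 0) f) {G s : ℝ} (hG : 0 ≤ G) (hs : G / 2 ≤ s) :
    f s - f (s - G) ≤ 2 * f (G / 2) := by
  rcases le_total s G with hsG | hGs
  · have h := hf.add_le_two_mul_map_midpoint (x := s) (y := G - s) (mem_Ici.2 (by linarith))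
      (mem_Ici.2 (by linarith))
    rw [show (s + (G - s)) / 2 = G / 2 by ring] at h
    rw [show s - G = -(G - s) by ring, hodd]
    linarith
  · have hsub := hf.map_add_le_of_nonneg hodd.map_zero.ge (x := s - G) (y := G)
      (by linarith) hG
    have hmid := hf.add_le_two_mul_map_midpoint (x := 0) (y := G) self_mem_Ici (mem_Ici.2 hG)
    rw [sub_add_cancel] at hsub
    rw [hodd.map_zero, zero_add, zero_add] at hmid
    linarith

theorem antitoneOn_one_add_div_add {c : ℝ} (hc0 : 0 < c) (hc1 : c ≤ 1) :
    AntitoneOn (fun t : ℝ => (1 + t) / (c + t)) (Ici 0) := by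
  intro t ht u hu htu
  simp only [mem_Ici] at ht hu
  rw [div_le_div_iff₀ (by linarith) (by linarith)]
  nlinarith [mul_nonneg (sub_nonneg.2 htu) (sub_nonneg.2 hc1)]

theorem monotoneOn_sinh_sq : MonotoneOn (fun s => sinh s ^ 2) (Ici 0) := fun _ hs _ _ hst =>
  pow_le_pow_left₀ (sinh_nonneg_iff.2 hs) (sinh_le_sinh.2 hst) 2

section

variable {a : ℝ}

theorem hasDerivAt_arsinh_sinh_div (ha : 0 < a) (s : ℝ) :
    HasDerivAt (fun s => arsinh (sinh s / a))
      (√((1 + sinh s ^ 2) / (a ^ 2 + sinh s ^ 2))) s := by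
  refine ((hasDerivAt_arsinh _).comp s ((hasDerivAt_sinh s).div_const a)).congr_deriv ?_
  have h : (1 + sinh s ^ 2) / (a ^ 2 + sinh s ^ 2) =
      (cosh s / a) ^ 2 / (1 + (sinh s / a) ^ 2) := by
    rw [div_pow, cosh_sq']
    field_simp
  rw [h, sqrt_div' _ (by positivity), sqrt_sq (by positivity), inv_mul_eq_div]

theorem strictMono_arsinh_sinh_div (ha : 0 < a) : StrictMono fun s => arsinh (sinh s / a) :=
  fun _ _ h => arsinh_lt_arsinh.2 (div_lt_div_of_pos_right (sinh_lt_sinh.2 h) ha)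

theorem concaveOn_arsinh_sinh_div (ha0 : 0 < a) (ha1 : a ≤ 1) :
    ConcaveOn ℝ (Ici 0) fun s => arsinh (sinh s / a) := by
  have hderiv := fun s => hasDerivAt_arsinh_sinh_div ha0 s
  refine AntitoneOn.concaveOn_of_deriv (convex_Ici 0)
    (fun s _ => (hderiv s).continuousAt.continuousWithinAt)
    (fun s _ => (hderiv s).differentiableAt.differentiableWithinAt) ?_
  rw [funext fun s => (hderiv s).deriv, interior_Ici]
  refine fun s hs t ht hst => sqrt_le_sqrt ?_
  refine (antitoneOn_one_add_div_add (by positivity) (by nlinarith)).comp_MonotoneOn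
    (monotoneOn_sinh_sq.mono Ioi_subset_Ici_self) (fun s _ => mem_Ici.2 (sq_nonneg _)) hs ht hst

end

/-- for fixed `G > 0` and `φ ∈ (0, π/2]`, the function
`f(s) = arcsinh(sinh s / sin φ)` is odd, strictly increasing, and concave on `[0, ∞)`;
consequently `sup { f(s) - f(s - G) : s ≥ G/2 }` is attained and equals
`f(G/2) - f(-G/2) = 2·arcsinh(sinh(G/2)/sin φ)`. -/
theorem stmt10 (G φ : ℝ) (hG : 0 < G) (hφ : φ ∈ Ioc 0 (π / 2)) :
    let f : ℝ → ℝ := fun s => Real.arsinh (Real.sinh s / Real.sin φ)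
    (∀ s, f (-s) = -f s) ∧ StrictMono f ∧ ConcaveOn ℝ (Ici 0) f ∧
      IsGreatest {y | ∃ s, G / 2 ≤ s ∧ y = f s - f (s - G)}
        (2 * Real.arsinh (Real.sinh (G / 2) / Real.sin φ)) := by
  intro f
  have hsin : 0 < sin φ := sin_pos_of_pos_of_lt_pi hφ.1 (by linarith [hφ.2, pi_pos])
  have hodd : f.Odd := fun s => by simp only [f, sinh_neg, neg_div, arsinh_neg]
  have hconc : ConcaveOn ℝ (Ici 0) f := concaveOn_arsinh_sinh_div hsin (sin_le_one φ)
  refine ⟨hodd, strictMono_arsinh_sinh_div hsin, hconc, ⟨G / 2, le_rfl, ?_⟩, ?_⟩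
  · change 2 * f (G / 2) = f (G / 2) - f (G / 2 - G)
    rw [show G / 2 - G = -(G / 2) by ring, hodd]
    ring
  · rintro _ ⟨s, hs, rfl⟩
    exact hodd.sub_le_two_mul_map_half_of_concaveOn hconc hG.le hs
end
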